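/- For any t, k ∈ ℕ with 1 ≤ t ≤ 2^k and any data sequence x_{1:t} ∈ 𝒳^t, increasing the tree depth by one costs at most a factor 3/2: (2/3)·PTW_{k+1}(x_{1:t}) ≤ PTW_k(x_{1:t}). -/
import Mathlib


/-- The set `𝒞_d(t)` of binary temporal partitions starting at `t`, represented as
finsets of segments `(a,b)` (each segment identified with the interval `{a,…,b}`). -/
def Cpt : ℕ → ℕ → Finset (Finset (ℕ × ℕ))
  | 0, t => {{(t, t)}}
  | d + 1, t =>
      insert {(t, t + 2 ^ (d + 1) - 1)}
        ((Cpt d t ×ˢ Cpt d (t + 2 ^ d)).image fun p => p.1 ∪ p.2)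

/-- `Γ_d(P)`: the number of nodes of depth less than `d` in the binary partition tree
associated with `P ∈ 𝒞_d(t)`, defined by the recursion `Γ_0(P) = 0`,
`Γ_{d+1}({(t, t+2^{d+1}-1)}) = 1` and `Γ_{d+1}(S₁ ∪ S₂) = Γ_d(S₁) + Γ_d(S₂) + 1`. -/
def Gam : ℕ → ℕ → Finset (ℕ × ℕ) → ℕ
  | 0, _, _ => 0
  | d + 1, t, P =>
      if P = {(t, t + 2 ^ (d + 1) - 1)} then 1
      else Gam d t (P.filter fun s => s.2 < t + 2 ^ d)
            + Gam d (t + 2 ^ d) (P.filter fun s => t + 2 ^ d ≤ s.1) + 1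

/-- The substring `x_{a:min(b,n)}` of the (1-based) sequence `x` of length `n`,
treated as a standalone string; it is the empty string when `a > min(b,n)`. -/
def seg {𝒳 : Type*} (x : ℕ → 𝒳) (n a b : ℕ) : List 𝒳 :=
  (List.range (min b n + 1 - a)).map fun i => x (a + i)

/-- `ρ` is a probabilistic data generating source: `ρ(ε) = 1`,
`ρ(x_{1:n}) = ∑_{y ∈ 𝒳} ρ(x_{1:n} y)`, and all values lie in `[0,1]`. -/
def IsSource {𝒳 : Type*} [Fintype 𝒳] (ρ : List 𝒳 → ℝ) : Prop :=
  ρ [] = 1 ∧ (∀ l : List 𝒳, ρ l = ∑ y : 𝒳, ρ (l ++ [y])) ∧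
    ∀ l : List 𝒳, ρ l ∈ Set.Icc (0 : ℝ) 1

/-- The Partition Tree Weighting mixture
`PTW_d(x_{1:n}) = ∑_{P ∈ 𝒞_d} 2^{-Γ_d(P)} ∏_{(a,b) ∈ P} ρ(x_{a:b})` (for `n ≤ 2^d`). -/
noncomputable def PTW {𝒳 : Type*} (ρ : List 𝒳 → ℝ) (d : ℕ) (x : ℕ → 𝒳) (n : ℕ) : ℝ :=
  ∑ P ∈ Cpt d 1, (2 : ℝ) ^ (-(Gam d 1 P : ℤ)) * ∏ s ∈ P, ρ (seg x n s.1 s.2)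

lemma mem_Cpt_bounds : ∀ d t P, P ∈ Cpt d t → ∀ s ∈ P, t ≤ s.1 ∧ s.1 ≤ s.2 ∧ s.2 < t + 2 ^ d := by
  intro d
  induction d with
  | zero =>
    intro t P hP s hs
    simp only [Cpt, Finset.mem_singleton] at hP
    subst hP
    simp only [Finset.mem_singleton] at hs
    subst hs
    simp
  | succ d ih =>
    intro t P hP s hs
    have h1 : (1:ℕ) ≤ 2 ^ d := Nat.one_le_two_pow
    have h2 : (2:ℕ) ^ (d+1) = 2 ^ d + 2 ^ d := by rw [pow_succ]; ring
    simp only [Cpt, Finset.mem_insert, Finset.mem_image, Finset.mem_product] at hP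
    rcases hP with rfl | ⟨⟨P1, P2⟩, ⟨hP1, hP2⟩, rfl⟩
    · simp only [Finset.mem_singleton] at hs
      subst hs
      simp only
      omega
    · rcases Finset.mem_union.1 hs with h | h
      · have := ih t P1 hP1 s h
        omega
      · have := ih _ P2 hP2 s h
        omega

lemma Cpt_nonempty : ∀ d t P, P ∈ Cpt d t → P.Nonempty := by
  intro d
  induction d with
  | zero =>
    intro t P hP
    simp only [Cpt, Finset.mem_singleton] at hP
    subst hP; simp
  | succ d ih =>
    intro t P hP
    simp only [Cpt, Finset.mem_insert, Finset.mem_image, Finset.mem_product] at hP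
    rcases hP with rfl | ⟨⟨P1, P2⟩, ⟨hP1, _⟩, rfl⟩
    · simp
    · exact (ih t P1 hP1).mono Finset.subset_union_left

lemma union_ne_sing {d t : ℕ} {P1 P2 : Finset (ℕ × ℕ)}
    (hP1 : P1 ∈ Cpt d t) (hP2 : P2 ∈ Cpt d (t + 2 ^ d)) :
    P1 ∪ P2 ≠ {(t, t + 2 ^ (d + 1) - 1)} := by
  intro h
  obtain ⟨s, hs⟩ := Cpt_nonempty d t P1 hP1
  have hb := mem_Cpt_bounds d t P1 hP1 s hs
  have : s ∈ ({(t, t + 2 ^ (d + 1) - 1)} : Finset (ℕ × ℕ)) :=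
    h ▸ Finset.mem_union_left _ hs
  simp only [Finset.mem_singleton] at this
  subst this
  have h1 : (1:ℕ) ≤ 2 ^ d := Nat.one_le_two_pow
  have h2 : (2:ℕ) ^ (d+1) = 2 ^ d + 2 ^ d := by rw [pow_succ]; ring
  simp only at hb
  omega

lemma filter_left {d t : ℕ} {P1 P2 : Finset (ℕ × ℕ)}
    (hP1 : P1 ∈ Cpt d t) (hP2 : P2 ∈ Cpt d (t + 2 ^ d)) :
    (P1 ∪ P2).filter (fun s => s.2 < t + 2 ^ d) = P1 := by
  ext s
  simp only [Finset.mem_filter, Finset.mem_union]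
  constructor
  · rintro ⟨h | h, hlt⟩
    · exact h
    · have := mem_Cpt_bounds d _ P2 hP2 s h
      omega
  · intro h
    exact ⟨Or.inl h, (mem_Cpt_bounds d t P1 hP1 s h).2.2⟩

lemma filter_right {d t : ℕ} {P1 P2 : Finset (ℕ × ℕ)}
    (hP1 : P1 ∈ Cpt d t) (hP2 : P2 ∈ Cpt d (t + 2 ^ d)) :
    (P1 ∪ P2).filter (fun s => t + 2 ^ d ≤ s.1) = P2 := by
  ext s
  simp only [Finset.mem_filter, Finset.mem_union]
  constructor
  · rintro ⟨h | h, hle⟩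
    · have := mem_Cpt_bounds d t P1 hP1 s h
      omega
    · exact h
  · intro h
    exact ⟨Or.inr h, (mem_Cpt_bounds d _ P2 hP2 s h).1⟩

lemma Cpt_disjoint {d t : ℕ} {P1 P2 : Finset (ℕ × ℕ)}
    (hP1 : P1 ∈ Cpt d t) (hP2 : P2 ∈ Cpt d (t + 2 ^ d)) :
    Disjoint P1 P2 := by
  rw [Finset.disjoint_left]
  intro s h1 h2
  have := mem_Cpt_bounds d t P1 hP1 s h1
  have := mem_Cpt_bounds d _ P2 hP2 s h2
  omega

lemma Gam_union {d t : ℕ} {P1 P2 : Finset (ℕ × ℕ)}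
    (hP1 : P1 ∈ Cpt d t) (hP2 : P2 ∈ Cpt d (t + 2 ^ d)) :
    Gam (d + 1) t (P1 ∪ P2) = Gam d t P1 + Gam d (t + 2 ^ d) P2 + 1 := by
  simp only [Gam, if_neg (union_ne_sing hP1 hP2), filter_left hP1 hP2, filter_right hP1 hP2]

lemma Gam_sing (d t : ℕ) : Gam (d + 1) t {(t, t + 2 ^ (d + 1) - 1)} = 1 := by
  simp [Gam]

lemma sum_Cpt_succ (d t : ℕ) (f : Finset (ℕ × ℕ) → ℝ) :
    ∑ P ∈ Cpt (d + 1) t, f P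
      = f {(t, t + 2 ^ (d + 1) - 1)}
        + ∑ P1 ∈ Cpt d t, ∑ P2 ∈ Cpt d (t + 2 ^ d), f (P1 ∪ P2) := by
  have hsing : ({(t, t + 2 ^ (d + 1) - 1)} : Finset (ℕ × ℕ)) ∉
      ((Cpt d t ×ˢ Cpt d (t + 2 ^ d)).image fun p => p.1 ∪ p.2) := by
    intro h
    simp only [Finset.mem_image, Finset.mem_product] at h
    obtain ⟨⟨P1, P2⟩, ⟨h1, h2⟩, heq⟩ := h
    exact union_ne_sing h1 h2 heq
  have hinj : ∀ p ∈ Cpt d t ×ˢ Cpt d (t + 2 ^ d), ∀ q ∈ Cpt d t ×ˢ Cpt d (t + 2 ^ d),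
      (fun p : Finset (ℕ × ℕ) × Finset (ℕ × ℕ) => p.1 ∪ p.2) p
        = (fun p : Finset (ℕ × ℕ) × Finset (ℕ × ℕ) => p.1 ∪ p.2) q → p = q := by
    rintro ⟨P1, P2⟩ hp ⟨Q1, Q2⟩ hq h
    simp only [Finset.mem_product] at hp hq
    simp only at h
    have e1 : P1 = Q1 := by
      rw [← filter_left hp.1 hp.2, h, filter_left hq.1 hq.2]
    have e2 : P2 = Q2 := by
      rw [← filter_right hp.1 hp.2, h, filter_right hq.1 hq.2]
    simp [e1, e2]
  show ∑ P ∈ insert _ _, f P = _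
  rw [Finset.sum_insert hsing, Finset.sum_image hinj, Finset.sum_product]

lemma weight_sum : ∀ d t, ∑ P ∈ Cpt d t, (2 : ℝ) ^ (-(Gam d t P : ℤ)) = 1 := by
  intro d
  induction d with
  | zero => intro t; simp [Cpt, Gam]
  | succ d ih =>
    intro t
    rw [sum_Cpt_succ d t (fun P => (2 : ℝ) ^ (-(Gam (d+1) t P : ℤ)))]
    have key : ∀ P1 ∈ Cpt d t, ∀ P2 ∈ Cpt d (t + 2 ^ d),
        (2 : ℝ) ^ (-(Gam (d+1) t (P1 ∪ P2) : ℤ))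
          = (2 : ℝ) ^ (-(Gam d t P1 : ℤ)) * (2 : ℝ) ^ (-(Gam d (t + 2^d) P2 : ℤ)) * 2⁻¹ := by
      intro P1 h1 P2 h2
      rw [Gam_union h1 h2]
      push_cast
      rw [neg_add, neg_add, zpow_add₀ (two_ne_zero), zpow_add₀ (two_ne_zero)]
      norm_num
    rw [Finset.sum_congr rfl fun P1 h1 => Finset.sum_congr rfl fun P2 h2 => key P1 h1 P2 h2]
    simp only [← Finset.sum_mul, ← Finset.mul_sum]
    rw [ih, ih, Gam_sing]
    norm_num

lemma seg_empty' {𝒳 : Type*} (x : ℕ → 𝒳) {n a : ℕ} (b : ℕ) (h : n < a) :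
    seg x n a b = [] := by
  unfold seg
  have : min b n + 1 - a = 0 := by
    have := min_le_right b n; omega
  rw [this]
  simp

lemma seg_top {𝒳 : Type*} (x : ℕ → 𝒳) {n a b b' : ℕ} (hb : n ≤ b) (hb' : n ≤ b') :
    seg x n a b = seg x n a b' := by
  unfold seg
  rw [min_eq_right hb, min_eq_right hb']

lemma ptw_nonneg {𝒳 : Type*} [Fintype 𝒳] {ρ : List 𝒳 → ℝ} (hρ : IsSource ρ)
    (d : ℕ) (x : ℕ → 𝒳) (n : ℕ) : 0 ≤ PTW ρ d x n := by
  refine Finset.sum_nonneg fun P _ => mul_nonneg (by positivity) ?_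
  exact Finset.prod_nonneg fun s _ => (hρ.2.2 _).1

lemma ptw_lower {𝒳 : Type*} [Fintype 𝒳] {ρ : List 𝒳 → ℝ} (hρ : IsSource ρ)
    {k t c : ℕ} (ht1 : 1 ≤ t) (ht2 : t ≤ 2 ^ k) (hc : t ≤ c) (x : ℕ → 𝒳) :
    ρ (seg x t 1 c) ≤ 2 * PTW ρ k x t := by
  cases k with
  | zero =>
    have ht : t = 1 := by simpa using le_antisymm ht2 ht1
    subst ht
    have : PTW ρ 0 x 1 = ρ (seg x 1 1 c) := by
      simp only [PTW, Cpt, Gam, Finset.sum_singleton, Finset.prod_singleton]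
      rw [seg_top x (le_refl 1) hc]
      norm_num
    rw [← this]
    linarith [ptw_nonneg hρ 0 x 1]
  | succ d =>
    have key : PTW ρ (d+1) x t
        = (2 : ℝ) ^ (-(Gam (d+1) 1 {(1, 1 + 2 ^ (d + 1) - 1)} : ℤ))
            * ∏ s ∈ ({(1, 1 + 2 ^ (d + 1) - 1)} : Finset (ℕ × ℕ)), ρ (seg x t s.1 s.2)
          + ∑ P1 ∈ Cpt d 1, ∑ P2 ∈ Cpt d (1 + 2 ^ d),
              (2 : ℝ) ^ (-(Gam (d+1) 1 (P1 ∪ P2) : ℤ)) * ∏ s ∈ P1 ∪ P2, ρ (seg x t s.1 s.2) :=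
      sum_Cpt_succ d 1 _
    have hrest : 0 ≤ ∑ P1 ∈ Cpt d 1, ∑ P2 ∈ Cpt d (1 + 2 ^ d),
        (2 : ℝ) ^ (-(Gam (d+1) 1 (P1 ∪ P2) : ℤ)) * ∏ s ∈ P1 ∪ P2, ρ (seg x t s.1 s.2) := by
      refine Finset.sum_nonneg fun P1 _ => Finset.sum_nonneg fun P2 _ =>
        mul_nonneg (by positivity) (Finset.prod_nonneg fun s _ => (hρ.2.2 _).1)
    have hseg : seg x t 1 (1 + 2 ^ (d + 1) - 1) = seg x t 1 c := by
      refine seg_top x ?_ hc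
      have : (1:ℕ) ≤ 2 ^ (d+1) := Nat.one_le_two_pow
      omega
    rw [key, Gam_sing, Finset.prod_singleton]
    simp only [hseg]
    have : ((2:ℝ) ^ (-(1:ℕ) : ℤ)) = 1/2 := by norm_num
    rw [this]
    linarith

/-- For any `t, k ∈ ℕ` with `1 ≤ t ≤ 2^k` and any data sequence
`x_{1:t} ∈ 𝒳ᵗ`, increasing the tree depth by one costs at most a factor `3/2`:
`(2/3)·PTW_{k+1}(x_{1:t}) ≤ PTW_k(x_{1:t})`. -/
theorem ptw_depth_increase {𝒳 : Type*} [Fintype 𝒳] [Nonempty 𝒳]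
    (ρ : List 𝒳 → ℝ) (hρ : IsSource ρ)
    (k t : ℕ) (ht1 : 1 ≤ t) (ht2 : t ≤ 2 ^ k) (x : ℕ → 𝒳) :
    2 / 3 * PTW ρ (k + 1) x t ≤ PTW ρ k x t := by
  have key : PTW ρ (k+1) x t
      = (2 : ℝ) ^ (-(Gam (k+1) 1 {(1, 1 + 2 ^ (k + 1) - 1)} : ℤ))
          * ∏ s ∈ ({(1, 1 + 2 ^ (k + 1) - 1)} : Finset (ℕ × ℕ)), ρ (seg x t s.1 s.2)
        + ∑ P1 ∈ Cpt k 1, ∑ P2 ∈ Cpt k (1 + 2 ^ k),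
            (2 : ℝ) ^ (-(Gam (k+1) 1 (P1 ∪ P2) : ℤ)) * ∏ s ∈ P1 ∪ P2, ρ (seg x t s.1 s.2) :=
    sum_Cpt_succ k 1 _
  -- rewrite the double sum
  have hterm : ∀ P1 ∈ Cpt k 1, ∀ P2 ∈ Cpt k (1 + 2 ^ k),
      (2 : ℝ) ^ (-(Gam (k+1) 1 (P1 ∪ P2) : ℤ)) * ∏ s ∈ P1 ∪ P2, ρ (seg x t s.1 s.2)
        = ((2 : ℝ) ^ (-(Gam k 1 P1 : ℤ)) * ∏ s ∈ P1, ρ (seg x t s.1 s.2))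
            * (2 : ℝ) ^ (-(Gam k (1 + 2 ^ k) P2 : ℤ)) * 2⁻¹ := by
    intro P1 h1 P2 h2
    rw [Gam_union h1 h2, Finset.prod_union (Cpt_disjoint h1 h2)]
    have hone : ∏ s ∈ P2, ρ (seg x t s.1 s.2) = 1 := by
      refine Finset.prod_eq_one fun s hs => ?_
      have hb := mem_Cpt_bounds k (1 + 2^k) P2 h2 s hs
      rw [seg_empty' x s.2 (by omega)]
      exact hρ.1
    rw [hone]
    push_cast
    rw [neg_add, neg_add, zpow_add₀ (two_ne_zero), zpow_add₀ (two_ne_zero), zpow_neg_one]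
    ring
  rw [key, Gam_sing, Finset.prod_singleton,
    Finset.sum_congr rfl fun P1 h1 => Finset.sum_congr rfl fun P2 h2 => hterm P1 h1 P2 h2]
  have hw : ∑ P1 ∈ Cpt k 1, ∑ P2 ∈ Cpt k (1 + 2 ^ k),
      ((2 : ℝ) ^ (-(Gam k 1 P1 : ℤ)) * ∏ s ∈ P1, ρ (seg x t s.1 s.2))
        * (2 : ℝ) ^ (-(Gam k (1 + 2 ^ k) P2 : ℤ)) * 2⁻¹
      = PTW ρ k x t * 2⁻¹ := by
    have : ∀ P1 ∈ Cpt k 1, ∑ P2 ∈ Cpt k (1 + 2 ^ k),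
        ((2 : ℝ) ^ (-(Gam k 1 P1 : ℤ)) * ∏ s ∈ P1, ρ (seg x t s.1 s.2))
          * (2 : ℝ) ^ (-(Gam k (1 + 2 ^ k) P2 : ℤ)) * 2⁻¹
        = ((2 : ℝ) ^ (-(Gam k 1 P1 : ℤ)) * ∏ s ∈ P1, ρ (seg x t s.1 s.2)) * 2⁻¹ := by
      intro P1 _
      rw [← Finset.sum_mul, ← Finset.mul_sum, weight_sum k (1 + 2^k), mul_one]
    rw [Finset.sum_congr rfl this, ← Finset.sum_mul]
    rfl
  rw [hw]
  have hlow : ρ (seg x t 1 (1 + 2 ^ (k + 1) - 1)) ≤ 2 * PTW ρ k x t := by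
    refine ptw_lower hρ ht1 ht2 ?_ x
    have h1 : (2:ℕ) ^ k ≤ 2 ^ (k+1) := Nat.pow_le_pow_right (by norm_num) (Nat.le_succ k)
    have h2 : (1:ℕ) ≤ 2 ^ (k+1) := Nat.one_le_two_pow
    omega
  have hnn := ptw_nonneg hρ k x t
  have : ((2:ℝ) ^ (-(1:ℕ) : ℤ)) = 1/2 := by norm_num
  rw [this]
  linarith
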